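/- Let M > 1, n ≥ 1 a natural number, and v ≥ 0 with (n−1)·M·v ≤ (M−1)·n. Define ᾱ = (M(1+M)v − n(2 + Mv + M²v) + √((−M(1+M)v + n(2 + Mv + M²v))² + 4(M−1)(1+M)Mn²))/(2(M−1)Mn), the positive root of the quadratic t(α) = (M−1)Mnα² + (−M(1+M)v + n(2+Mv+M²v))α − (1+M)n. Then h(ᾱ) ≤ 0, where h(α) = (M−1)Mnα³ − (M+1)(M−2)nα² − (4n+(M−1)(n−1)v)α + 2n. -/

import Mathlib

/-!
Dividing `h` by `t` leaves a remainder that is a positive multiple of `D α - n`, where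
`D = n + M (n - 1) v`: precisely `(M - 1) M n · h = q · t + M W (D α - n)` with
`W = (M - 1)² n + (n - 1)(M + 1)² v`. Hence `h(ᾱ) ≤ 0` amounts to `ᾱ ≤ n / D`, and since
`t(0) < 0`, this follows from `D² t(n / D) = (M - 1) n² ((M - 1) n - (n - 1) M v) ≥ 0`.
-/

/-- The cubic `h(α)` from the two-step stochastic stepsize schedule analysis. -/
noncomputable def hcub (M n v α : ℝ) : ℝ :=
  (M - 1) * M * n * α ^ 3 - (M + 1) * (M - 2) * n * α ^ 2
    - (4 * n + (M - 1) * (n - 1) * v) * α + 2 * n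

/-- The auxiliary quadratic `t(α)` from the two-step stochastic stepsize
schedule analysis. -/
noncomputable def tquad (M n v α : ℝ) : ℝ :=
  (M - 1) * M * n * α ^ 2
    + (-(M * (1 + M) * v) + n * (2 + M * v + M ^ 2 * v)) * α
    - (1 + M) * n

noncomputable def posRoot (a b c : ℝ) : ℝ :=
  (-b + √(b ^ 2 + 4 * a * c)) / (2 * a)

section posRoot

variable {a b c : ℝ}

theorem posRoot_isRoot (ha : a ≠ 0) (hd : 0 ≤ b ^ 2 + 4 * a * c) :
    a * posRoot a b c ^ 2 + b * posRoot a b c - c = 0 := by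
  set x := posRoot a b c
  have hx : 2 * a * x = -b + √(b ^ 2 + 4 * a * c) := by
    simp only [x, posRoot]
    field_simp
  have h4 : 4 * a * (a * x ^ 2 + b * x - c) = 0 := by
    linear_combination (2 * a * x + b + √(b ^ 2 + 4 * a * c)) * hx + Real.sq_sqrt hd
  simpa [ha] using h4

theorem posRoot_le_of_nonneg {r : ℝ} (ha : 0 < a) (hc : 0 < c) (hr : 0 ≤ r)
    (ht : 0 ≤ a * r ^ 2 + b * r - c) : posRoot a b c ≤ r := by
  have hpos : 0 < 2 * a * r + b := by nlinarith
  have hsqrt : √(b ^ 2 + 4 * a * c) ≤ 2 * a * r + b :=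
    Real.sqrt_le_iff.mpr ⟨hpos.le, by nlinarith⟩
  rw [posRoot, div_le_iff₀ (by positivity)]
  linarith

end posRoot

theorem mul_hcub_eq (M n v α : ℝ) :
    (M - 1) * M * n * hcub M n v α =
      ((M - 1) * M * n * α - (M - 1) * M * n - (M + 1) * M * (n - 1) * v) * tquad M n v α
        + M * ((M - 1) ^ 2 * n + (n - 1) * (M + 1) ^ 2 * v) * ((n + M * (n - 1) * v) * α - n) := by
  unfold hcub tquad
  ring

theorem tquad_div_nonneg {M n v : ℝ} (hM : 1 < M) (hD : n + M * (n - 1) * v ≠ 0)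
    (hbound : (n - 1) * M * v ≤ (M - 1) * n) :
    0 ≤ tquad M n v (n / (n + M * (n - 1) * v)) := by
  have key : tquad M n v (n / (n + M * (n - 1) * v)) =
      (M - 1) * n ^ 2 * ((M - 1) * n - (n - 1) * M * v) / (n + M * (n - 1) * v) ^ 2 := by
    unfold tquad
    field_simp
    ring
  rw [key]
  apply div_nonneg _ (sq_nonneg _)
  apply mul_nonneg (mul_nonneg _ (sq_nonneg _)) <;> linarith

theorem stmt_12 (M : ℝ) (n : ℕ) (v : ℝ)
    (hM : 1 < M) (hn : 1 ≤ n) (hv : 0 ≤ v)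
    (hbound : ((n : ℝ) - 1) * M * v ≤ (M - 1) * n) :
    let αbar : ℝ :=
      (M * (1 + M) * v - (n : ℝ) * (2 + M * v + M ^ 2 * v)
          + Real.sqrt ((-(M * (1 + M) * v) + (n : ℝ) * (2 + M * v + M ^ 2 * v)) ^ 2
              + 4 * (M - 1) * (1 + M) * M * (n : ℝ) ^ 2))
        / (2 * (M - 1) * M * (n : ℝ))
    hcub M (n : ℝ) v αbar ≤ 0 := by
  intro αbar
  have hN : (1 : ℝ) ≤ n := by exact_mod_cast hn
  have hA : 0 < (M - 1) * M * n := by apply mul_pos (mul_pos _ _) <;> linarith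
  have hC : 0 < (1 + M) * n := by apply mul_pos <;> linarith
  have hαbar : αbar =
      posRoot ((M - 1) * M * n) (-(M * (1 + M) * v) + n * (2 + M * v + M ^ 2 * v)) ((1 + M) * n) := by
    simp only [αbar, posRoot]
    ring_nf
  have hroot : tquad M n v αbar = 0 := by
    rw [hαbar]
    exact posRoot_isRoot hA.ne' (by positivity)
  have hD : 0 < n + M * (n - 1) * v := by
    have := mul_nonneg (mul_nonneg (by linarith : 0 ≤ M) (by linarith : (0 : ℝ) ≤ n - 1)) hv
    linarith
  have hle : (n + M * (n - 1) * v) * αbar ≤ n := by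
    rw [← le_div_iff₀' hD, hαbar]
    exact posRoot_le_of_nonneg hA hC (by positivity) (tquad_div_nonneg hM hD.ne' hbound)
  have hW : 0 ≤ M * ((M - 1) ^ 2 * n + (n - 1) * (M + 1) ^ 2 * v) := by
    apply mul_nonneg (by linarith) (add_nonneg (by positivity) (mul_nonneg (mul_nonneg _ _) hv))
      <;> nlinarith
  have hprod : (M - 1) * M * n * hcub M n v αbar ≤ 0 := by
    rw [mul_hcub_eq, hroot, mul_zero, zero_add]
    exact mul_nonpos_of_nonneg_of_nonpos hW (by linarith)
  exact nonpos_of_mul_nonpos_right hprod hA
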